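/- Let μ be the product probability measure on Ω = ℕ → Bool whose coordinates are independent fair coin flips, and let v : Ω → ℕ → Bool be predictable. Then almost surely some coin eventually equals its target: μ {ω | ∃ k, ω k = v ω k} = 1. (This is the paper's statement that the MMR algorithm satisfies BC-termination with probability 1, i.e., lim_{r→∞} Pr[decision by round r] = 1.) -/

import Mathlib

open MeasureTheory

/-- `μ` is the product probability measure on `Ω = ℕ → Bool` whose coordinates are
independent fair coin flips: every cylinder event fixing the coins on a finite set `s`
of rounds has probability `(1/2)^|s|`.  (Taking `s = ∅` shows `μ` is a probability
measure, and these cylinder probabilities uniquely determine the product measure.) -/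
def IsFairCoinSeq (μ : Measure (ℕ → Bool)) : Prop :=
  ∀ (s : Finset ℕ) (f : ℕ → Bool),
    μ {ω | ∀ k ∈ s, ω k = f k} = (1 / 2 : ENNReal) ^ s.card

/-- `v` is predictable: the round-`k` target depends only on the coins of earlier
rounds. -/
def Predictable (v : (ℕ → Bool) → ℕ → Bool) : Prop :=
  ∀ ω ω' k, (∀ j < k, ω j = ω' j) → v ω k = v ω' k

/-!
A sequence that misses its predictable target in every round is determined round by round:
the earlier coins fix the round-`k` target, and the round-`k` coin must be the other value.
So the event of never matching is at most a single point, and under fair coins every point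
has probability at most `(1/2)^n` for all `n`, hence probability zero.
-/

theorem Predictable.subsingleton_setOf_forall_ne {v : (ℕ → Bool) → ℕ → Bool}
    (hv : Predictable v) : {ω | ∀ k, ω k ≠ v ω k}.Subsingleton := by
  intro ω hω ω' hω'
  funext k
  induction k using Nat.strong_induction_on with
  | _ k ih =>
    calc ω k = !v ω k := Bool.eq_not_of_ne (hω k)
      _ = !v ω' k := by rw [hv ω ω' k ih]
      _ = ω' k := (Bool.eq_not_of_ne (hω' k)).symm

namespace IsFairCoinSeq

variable {μ : Measure (ℕ → Bool)}

theorem isProbabilityMeasure (hμ : IsFairCoinSeq μ) : IsProbabilityMeasure μ :=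
  ⟨by simpa using hμ ∅ (fun _ => false)⟩

theorem measure_singleton (hμ : IsFairCoinSeq μ) (ω : ℕ → Bool) : μ {ω} = 0 := by
  have hbound : ∀ n, μ {ω} ≤ (1 / 2 : ENNReal) ^ n := fun n =>
    calc μ {ω} ≤ μ {ω' | ∀ k ∈ Finset.range n, ω' k = ω k} :=
          measure_mono fun ω' hω' _ _ => by rw [hω']
      _ = (1 / 2 : ENNReal) ^ n := by rw [hμ, Finset.card_range]
  exact le_antisymm (ge_of_tendsto' (ENNReal.tendsto_pow_atTop_nhds_zero_of_lt_one
    (by norm_num)) hbound) zero_le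

theorem nullSingletonClass (hμ : IsFairCoinSeq μ) : NullSingletonClass μ :=
  ⟨hμ.measure_singleton⟩

end IsFairCoinSeq

/-- Almost surely, some coin eventually equals its predictable target. -/
theorem eventually_coin_matches_target
    (μ : Measure (ℕ → Bool)) (hμ : IsFairCoinSeq μ)
    (v : (ℕ → Bool) → ℕ → Bool) (hv : Predictable v) :
    μ {ω | ∃ k, ω k = v ω k} = 1 := by
  have := hμ.isProbabilityMeasure
  have := hμ.nullSingletonClass
  have hmiss : μ {ω | ∃ k, ω k = v ω k}ᶜ = 0 := by
    simpa only [Set.compl_ofPred, not_exists] using hv.subsingleton_setOf_forall_ne.measure_zero μ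
  rw [measure_congr (ae_eq_univ.mpr hmiss), measure_univ]
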